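/- arXiv:2504.15662 — 3 statements merged into one kernel-verified Lean document; each statement's English description precedes it below -/
import Mathlib

section
/- Let Φ be an automorphism of an effective abstract GKM graph (Γ,α) (with compatible linear map Ψ) that preserves a fixed compatible connection ∇. Then Φ is uniquely determined by its value on a single vertex v and on all edges emanating from v; i.e., if two such connection-preserving automorphisms agree on v and on E(Γ)_v, they are equal. -/
/-- An abstract GKM graph: a finite graph (each edge appearing with both
orientations, no loops) with edges labelled by elements of `ℤ^m/±1`, represented by
a choice of lift `label : E → ℤ^m` well defined up to sign. -/
structure GKMGraph (m : ℕ) where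
  V : Type
  E : Type
  fintV : Fintype V
  fintE : Fintype E
  src : E → V
  bar : E → E
  bar_invol : ∀ e, bar (bar e) = e
  no_loops : ∀ e, src (bar e) ≠ src e
  label : E → (Fin m → ℤ)
  label_bar : ∀ e, label (bar e) = label e ∨ label (bar e) = - label e

namespace GKMGraph

variable {m : ℕ} (Γ : GKMGraph m)

/-- The terminal vertex of an (oriented) edge. -/
def tgt (e : Γ.E) : Γ.V := Γ.src (Γ.bar e)

/-- Connectivity of the graph. -/
def Connected : Prop :=
  ∀ v w : Γ.V, Relation.ReflTransGen (fun a b => ∃ e, Γ.src e = a ∧ Γ.tgt e = b) v w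

/-- The label of an edge, viewed with rational coefficients. -/
def labelℚ (e : Γ.E) : Fin m → ℚ := fun i => (Γ.label e i : ℚ)

/-- A connection on a GKM graph compatible with the axial function: a family of
bijections `∇_e : E_{i(e)} → E_{t(e)}` with `∇_e e = ē`, `∇_{ē} = ∇_e⁻¹`, and
`α(∇_e f) = ± α(f) + c α(e)`. -/
structure Connection where
  conn : Γ.E → Γ.E → Γ.E
  conn_self : ∀ e, conn e e = Γ.bar e
  conn_src : ∀ e f, Γ.src f = Γ.src e → Γ.src (conn e f) = Γ.tgt e
  conn_inv : ∀ e f, Γ.src f = Γ.src e → conn (Γ.bar e) (conn e f) = f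
  compat : ∀ e f, Γ.src f = Γ.src e →
    ∃ ε c : ℤ, (ε = 1 ∨ ε = -1) ∧ Γ.label (conn e f) = ε • Γ.label f + c • Γ.label e

/-- An automorphism of the GKM graph `Γ`: an automorphism of the underlying graph
together with a linear isomorphism `Ψ : ℤ^m → ℤ^m` with `α(Φ(e)) = Ψ(α(e))`
(as elements of `ℤ^m/±1`). -/
structure Aut where
  vmap : Γ.V ≃ Γ.V
  emap : Γ.E ≃ Γ.E
  lin : (Fin m → ℤ) ≃ₗ[ℤ] (Fin m → ℤ)
  src_comm : ∀ e, Γ.src (emap e) = vmap (Γ.src e)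
  bar_comm : ∀ e, emap (Γ.bar e) = Γ.bar (emap e)
  label_comm : ∀ e, Γ.label (emap e) = lin (Γ.label e) ∨ Γ.label (emap e) = - lin (Γ.label e)

end GKMGraph

/-- An automorphism preserves a connection if `Φ(∇_e f) = ∇_{Φ(e)} Φ(f)`. -/
def GKMGraph.Aut.Preserves {m : ℕ} {Γ : GKMGraph m} (Φ : Γ.Aut) (C : Γ.Connection) : Prop :=
  ∀ e f, Γ.src f = Γ.src e → Φ.emap (C.conn e f) = C.conn (Φ.emap e) (Φ.emap f)

/-!
Connection-preserving automorphisms propagate agreement along edges: if `Φ₁, Φ₂` agree on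
an edge `e` and on all edges at its source, then every edge `g` at the target of `e` is
`∇_e f` for the edge `f = ∇_{ē} g` at the source, so `Φᵢ g = ∇_{Φᵢ e} (Φᵢ f)` takes the
same value for `i = 1, 2`. Connectedness then spreads agreement from `v` to the whole graph.
-/

namespace GKMGraph

variable {m : ℕ} {Γ : GKMGraph m}

namespace Connection

variable (C : Γ.Connection)

theorem src_conn_bar {e g : Γ.E} (hg : Γ.src g = Γ.tgt e) :
    Γ.src (C.conn (Γ.bar e) g) = Γ.src e := by
  simpa [tgt, Γ.bar_invol] using C.conn_src (Γ.bar e) g hg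

theorem conn_conn_bar {e g : Γ.E} (hg : Γ.src g = Γ.tgt e) :
    C.conn e (C.conn (Γ.bar e) g) = g := by
  simpa [Γ.bar_invol] using C.conn_inv (Γ.bar e) g hg

end Connection

namespace Aut

theorem tgt_comm (Φ : Γ.Aut) (e : Γ.E) : Φ.vmap (Γ.tgt e) = Γ.tgt (Φ.emap e) := by
  rw [tgt, tgt, ← Φ.bar_comm, Φ.src_comm]

def AgreeAt (Φ₁ Φ₂ : Γ.Aut) (w : Γ.V) : Prop :=
  Φ₁.vmap w = Φ₂.vmap w ∧ ∀ g, Γ.src g = w → Φ₁.emap g = Φ₂.emap g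

variable {C : Γ.Connection} {Φ₁ Φ₂ : Γ.Aut}

theorem AgreeAt.tgt (h₁ : Φ₁.Preserves C) (h₂ : Φ₂.Preserves C) {e : Γ.E}
    (h : AgreeAt Φ₁ Φ₂ (Γ.src e)) : AgreeAt Φ₁ Φ₂ (Γ.tgt e) := by
  have hee : Φ₁.emap e = Φ₂.emap e := h.2 e rfl
  refine ⟨by rw [tgt_comm, tgt_comm, hee], fun g hg => ?_⟩
  have hf := C.src_conn_bar hg
  have hff := h.2 _ hf
  rw [← C.conn_conn_bar hg, h₁ e _ hf, h₂ e _ hf, hee, hff]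

theorem AgreeAt.of_reflTransGen (h₁ : Φ₁.Preserves C) (h₂ : Φ₂.Preserves C) {v w : Γ.V}
    (hvw : Relation.ReflTransGen (fun a b => ∃ e, Γ.src e = a ∧ Γ.tgt e = b) v w)
    (hv : AgreeAt Φ₁ Φ₂ v) : AgreeAt Φ₁ Φ₂ w := by
  induction hvw with
  | refl => exact hv
  | tail _ hstep ih =>
    obtain ⟨e, rfl, rfl⟩ := hstep
    exact ih.tgt h₁ h₂

end Aut

end GKMGraph

theorem stmt_0_general {m : ℕ} (Γ : GKMGraph m) (hconn : Γ.Connected)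
    (C : Γ.Connection) (Φ₁ Φ₂ : Γ.Aut)
    (h₁ : Φ₁.Preserves C) (h₂ : Φ₂.Preserves C)
    (v : Γ.V) (hv : Φ₁.vmap v = Φ₂.vmap v)
    (he : ∀ e, Γ.src e = v → Φ₁.emap e = Φ₂.emap e) :
    Φ₁.vmap = Φ₂.vmap ∧ Φ₁.emap = Φ₂.emap := by
  have agree : ∀ w, GKMGraph.Aut.AgreeAt Φ₁ Φ₂ w := fun w =>
    .of_reflTransGen h₁ h₂ (hconn v w) ⟨hv, he⟩
  exact ⟨Equiv.ext fun w => (agree w).1, Equiv.ext fun g => (agree (Γ.src g)).2 g rfl⟩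

/-- Any automorphism of an effective abstract GKM graph (the labels at every vertex
span all of `ℚ^m`, and at every vertex the labels of distinct edges are linearly
independent) which preserves a compatible connection `∇` is uniquely determined by
its value on one vertex `v` and on all edges emanating from `v`: two such
connection-preserving automorphisms agreeing there are equal. -/
theorem stmt_0 {m : ℕ} (Γ : GKMGraph m) (hconn : Γ.Connected)
    (heff : ∀ v : Γ.V,
      Submodule.span ℚ {x : Fin m → ℚ | ∃ e, Γ.src e = v ∧ x = Γ.labelℚ e} = ⊤)
    (hGKM : ∀ e f : Γ.E, Γ.src e = Γ.src f → e ≠ f →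
      LinearIndependent ℚ ![Γ.labelℚ e, Γ.labelℚ f])
    (C : Γ.Connection) (Φ₁ Φ₂ : Γ.Aut)
    (h₁ : Φ₁.Preserves C) (h₂ : Φ₂.Preserves C)
    (v : Γ.V) (hv : Φ₁.vmap v = Φ₂.vmap v)
    (he : ∀ e, Γ.src e = v → Φ₁.emap e = Φ₂.emap e) :
    Φ₁.vmap = Φ₂.vmap ∧ Φ₁.emap = Φ₂.emap :=
  stmt_0_general Γ hconn C Φ₁ Φ₂ h₁ h₂ v hv he
end

section
/- Type 2 automorphisms of the GKM graph Γ of G/T preserve the canonical connection: if ψ: G → G is an automorphism with ψ(T) = T, and Φ is defined on vertices by [w] ↦ [ψ(w)] and sends the edge joining [w] and [wσ_α] to the edge joining [ψ(w)] and [ψ(w)σ_{α∘dψ^{-1}}], then Φ(∇_e f) = ∇_{Φ(e)} Φ(f) for all adjacent edges e, f. -/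
/-!  Combinatorial model of the GKM graph of `G/T`: vertices are the elements of the
Weyl group `W`, the edges emanating from a vertex `w` are indexed by the roots modulo
sign (an index type `R` together with the corresponding reflections `σ : R → W`), and
the edge `(w, a)` joins `w` and `w * σ a`.  The canonical connection sends the edge
`f = (w, b)` along `e = (w, a)` to the edge `(w * σ a, b)`. -/

/-- The canonical connection on the GKM graph of `G/T`. -/
def conn {W R : Type*} [Group W] (σ : R → W) (e f : W × R) : W × R :=
  (e.1 * σ e.2, f.2)

/-- The Type 2 automorphism induced by an automorphism `ψ : G → G` with `ψ(T) = T`: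
on the Weyl group it acts by the induced group automorphism `ψ : W → W`, and it
permutes the roots by `r : R ≃ R` (corresponding to `α ↦ α ∘ dψ⁻¹`), subject to
`σ_{r a} = ψ (σ a)`.  On edges it sends the edge joining `[w]` and `[wσ_α]` to the
edge joining `[ψ(w)]` and `[ψ(w) σ_{α∘dψ⁻¹}]`. -/
def typeTwoEdge {W R : Type*} [Group W] (ψ : W ≃* W) (r : R ≃ R) (e : W × R) : W × R :=
  (ψ e.1, r e.2)

theorem stmt_6_general {W R : Type*} [Group W] (σ : R → W) (ψ : W ≃* W) (r : R ≃ R)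
    (hr : ∀ a, σ (r a) = ψ (σ a)) (e f : W × R) :
    typeTwoEdge ψ r (conn σ e f) = conn σ (typeTwoEdge ψ r e) (typeTwoEdge ψ r f) := by
  simp only [typeTwoEdge, conn, map_mul, hr]

/-- Type 2 automorphisms of the GKM graph of `G/T` preserve the canonical connection:
`Φ(∇_e f) = ∇_{Φ(e)} Φ(f)` for all edges `e, f` emanating from the same vertex. -/
theorem stmt_6 {W R : Type*} [Group W] (σ : R → W) (ψ : W ≃* W) (r : R ≃ R)
    (hr : ∀ a, σ (r a) = ψ (σ a)) (e f : W × R) (hef : f.1 = e.1) :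
    typeTwoEdge ψ r (conn σ e f) = conn σ (typeTwoEdge ψ r e) (typeTwoEdge ψ r f) :=
  stmt_6_general σ ψ r hr e f
end

section
/- Let Γ be any abstract GKM graph. For each unoriented edge e ∈ E(Γ), let S_e be the subgraph consisting of e and its two adjacent vertices. Then the map H²(Γ) → ⊕_{e∈E(Γ)} H²(S_e) induced by the inclusions is injective. -/
namespace GKMGraph

variable {m : ℕ} (Γ : GKMGraph m)

/-- Membership in the degree-two part of the equivariant graph cohomology
`H²_T(Γ)`: a tuple of degree-two classes satisfying the divisibility condition
`f_{i(e)} ≡ f_{t(e)} mod α(e)` along every edge. -/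
def IsCocycle (x : Γ.V → (Fin m → ℤ)) : Prop :=
  ∀ e : Γ.E, ∃ c : ℤ, x (Γ.tgt e) - x (Γ.src e) = c • Γ.label e

variable {Γ}

theorem Connected.apply_eq_of_forall_edge {α : Type*} (hconn : Γ.Connected) {f : Γ.V → α}
    (hf : ∀ e : Γ.E, f (Γ.src e) = f (Γ.tgt e)) (v w : Γ.V) : f v = f w := by
  induction hconn v w with
  | refl => rfl
  | tail _ hstep ih =>
    obtain ⟨e, rfl, rfl⟩ := hstep
    exact ih.trans (hf e)

end GKMGraph

/-- `H²(Γ)` is `H²_T(Γ)` modulo constant tuples, so two classes have the same image in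
`H²(S_e)` exactly when they differ by a constant on the two endpoints of `e`. -/
theorem stmt_9_general {m : ℕ} (Γ : GKMGraph m) (hconn : Γ.Connected)
    (x y : Γ.V → (Fin m → ℤ))
    (hloc : ∀ e : Γ.E, ∃ β : Fin m → ℤ,
      x (Γ.src e) = y (Γ.src e) + β ∧ x (Γ.tgt e) = y (Γ.tgt e) + β) :
    ∃ β : Fin m → ℤ, ∀ v : Γ.V, x v = y v + β := by
  have hdiff : ∀ v w, x v - y v = x w - y w := by
    refine hconn.apply_eq_of_forall_edge (f := fun v => x v - y v) fun e => ?_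
    obtain ⟨β, hsrc, htgt⟩ := hloc e
    rw [hsrc, htgt, add_sub_cancel_left, add_sub_cancel_left]
  rcases isEmpty_or_nonempty Γ.V with hempty | ⟨⟨v₀⟩⟩
  · exact ⟨0, hempty.elim⟩
  · exact ⟨x v₀ - y v₀, fun v => eq_add_of_sub_eq' (hdiff v v₀)⟩

/-- For a GKM graph `Γ` and an edge `e`, let `S_e` be the subgraph consisting of `e`
and its two adjacent vertices.  The map `H²(Γ) → ⊕_{e} H²(S_e)` induced by the
inclusions is injective.  Concretely: `H²` is the quotient of the degree-two
equivariant classes by the constant tuples, and two classes `x, y ∈ H²_T(Γ)` have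
the same image in `H²(S_e)` for every edge `e` exactly when for each `e` they differ
by a constant on the two endpoints of `e`; the conclusion is that then `x` and `y`
differ globally by a constant, i.e. define the same class in `H²(Γ)`. -/
theorem stmt_9 {m : ℕ} (Γ : GKMGraph m) (hconn : Γ.Connected)
    (x y : Γ.V → (Fin m → ℤ)) (hx : Γ.IsCocycle x) (hy : Γ.IsCocycle y)
    (hloc : ∀ e : Γ.E, ∃ β : Fin m → ℤ,
      x (Γ.src e) = y (Γ.src e) + β ∧ x (Γ.tgt e) = y (Γ.tgt e) + β) :
    ∃ β : Fin m → ℤ, ∀ v : Γ.V, x v = y v + β :=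
  stmt_9_general Γ hconn x y hloc
end
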